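/- arXiv:1410.4066 — 10 statements merged into one kernel-verified Lean document; each statement's English description precedes it below -/
import Mathlib

section
/- Suppose f : ℝⁿ → ℝ is differentiable on a convex set S and there exist p, q > 1 with 1/p + 1/q = 1 and M > 0 such that ‖∇f(x) − ∇f(y)‖_q^q ≤ M ‖x − y‖_p^p for all x, y ∈ S. Then for all x, y ∈ S, f(y) ≤ f(x) + ∇f(x)ᵀ(y − x) + (M^{1/q}/p) ‖y − x‖_p^p. -/
/-! Along the segment `c t = x + t (y - x)`, Hölder's inequality and the Hölder condition on the
gradient give
`⟪∇f(c t) - ∇f(x), y - x⟫ ≤ ‖∇f(c t) - ∇f(x)‖_q ‖y - x‖_p ≤ M^{1/q} (t ‖y - x‖_p)^{p/q} ‖y - x‖_p`,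
and `p/q = p - 1`. So `t ↦ f (c t)` has slope at most `⟪∇f(x), y - x⟫ + M^{1/q} ‖y - x‖_p^p t^{p-1}`,
and comparing it with the antiderivative of this bound on `[0, 1]` gives the claim. -/

open scoped RealInnerProductSpace

noncomputable def lpNorm {n : ℕ} (p : ℝ) (x : EuclideanSpace ℝ (Fin n)) : ℝ :=
  (∑ i, |x i| ^ p) ^ (1 / p)

open Set

lemma Real.le_rpow_mul_rpow_sub_one_of_rpow_le {a L M p q : ℝ} (hpq : p.HolderConjugate q)
    (ha : 0 ≤ a) (hL : 0 ≤ L) (hM : 0 ≤ M) (h : a ^ q ≤ M * L ^ p) :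
    a ≤ M ^ (1 / q) * L ^ (p - 1) := by
  rw [← Real.rpow_le_rpow_iff ha (by positivity) hpq.symm.pos]
  convert h using 1
  rw [Real.mul_rpow (by positivity) (by positivity), ← Real.rpow_mul hM, ← Real.rpow_mul hL,
    one_div_mul_cancel hpq.symm.ne_zero, Real.rpow_one, hpq.sub_one_mul_conj]

section lpNorm

variable {n : ℕ}

lemma lpNorm_nonneg (r : ℝ) (x : EuclideanSpace ℝ (Fin n)) : 0 ≤ lpNorm r x := by
  unfold lpNorm
  positivity

lemma lpNorm_smul {r : ℝ} (hr : r ≠ 0) (t : ℝ) (x : EuclideanSpace ℝ (Fin n)) :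
    lpNorm r (t • x) = |t| * lpNorm r x := by
  have hcoord : ∀ i, |(t • x) i| ^ r = |t| ^ r * |x i| ^ r := fun i => by
    rw [PiLp.smul_apply, smul_eq_mul, abs_mul, Real.mul_rpow (abs_nonneg _) (abs_nonneg _)]
  unfold lpNorm
  simp_rw [hcoord, ← Finset.mul_sum]
  rw [Real.mul_rpow (by positivity) (by positivity), ← Real.rpow_mul (abs_nonneg _),
    mul_one_div_cancel hr, Real.rpow_one]

lemma inner_le_lpNorm_mul_lpNorm {p q : ℝ} (hpq : p.HolderConjugate q)
    (u w : EuclideanSpace ℝ (Fin n)) : ⟪u, w⟫ ≤ lpNorm p u * lpNorm q w := by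
  have hinner : ⟪u, w⟫ = ∑ i, u i * w i := by
    simp [PiLp.inner_apply, mul_comm]
  rw [hinner]
  exact Real.inner_le_Lp_mul_Lq Finset.univ u w hpq

lemma inner_le_inner_add_of_lpNorm_sub_rpow_le {p q M : ℝ} (hpq : p.HolderConjugate q)
    (hM : 0 ≤ M) {u w d v : EuclideanSpace ℝ (Fin n)}
    (h : lpNorm q (u - w) ^ q ≤ M * lpNorm p d ^ p) :
    ⟪u, v⟫ ≤ ⟪w, v⟫ + M ^ (1 / q) * lpNorm p d ^ (p - 1) * lpNorm p v := by
  have hgrad : lpNorm q (u - w) ≤ M ^ (1 / q) * lpNorm p d ^ (p - 1) :=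
    Real.le_rpow_mul_rpow_sub_one_of_rpow_le hpq (lpNorm_nonneg _ _) (lpNorm_nonneg _ _) hM h
  calc ⟪u, v⟫ = ⟪w, v⟫ + ⟪u - w, v⟫ := by rw [inner_sub_left]; ring
    _ ≤ ⟪w, v⟫ + lpNorm q (u - w) * lpNorm p v := by
        gcongr
        exact inner_le_lpNorm_mul_lpNorm hpq.symm _ _
    _ ≤ _ := by gcongr; exact lpNorm_nonneg _ _

end lpNorm

lemma HasGradientAt.hasDerivAt_add_smul {E : Type*} [NormedAddCommGroup E]
    [InnerProductSpace ℝ E] [CompleteSpace E] {f : E → ℝ} {f' x v : E} {t : ℝ}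
    (h : HasGradientAt f f' (x + t • v)) :
    HasDerivAt (fun s : ℝ => f (x + s • v)) ⟪f', v⟫ t := by
  have hline : HasDerivAt (fun s : ℝ => x + s • v) v t := by
    simpa using ((hasDerivAt_id t).smul_const v).const_add x
  have hchain := h.hasFDerivAt.comp_hasDerivAt t hline
  simp only [InnerProductSpace.toDual_apply_apply, Function.comp_def] at hchain
  exact hchain

lemma le_add_of_hasDerivAt_le_add_mul_rpow {φ φ' : ℝ → ℝ} {a b p : ℝ} (hp : 1 ≤ p)
    (hφ : ∀ t ∈ Icc (0 : ℝ) 1, HasDerivAt φ (φ' t) t)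
    (hφ' : ∀ t ∈ Icc (0 : ℝ) 1, φ' t ≤ a + b * t ^ (p - 1)) :
    φ 1 ≤ φ 0 + a + b / p := by
  have hp0 : p ≠ 0 := by positivity
  have hB : ∀ t : ℝ, HasDerivAt (fun s => φ 0 + a * s + b / p * s ^ p) (a + b * t ^ (p - 1)) t :=
    fun t => by
      refine ((((hasDerivAt_id t).const_mul a).const_add (φ 0)).add
        ((Real.hasDerivAt_rpow_const (Or.inr hp)).const_mul (b / p))).congr_deriv ?_
      field_simp
  have hcomp := image_le_of_deriv_right_le_deriv_boundary (a := 0) (b := 1)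
    (B := fun s => φ 0 + a * s + b / p * s ^ p)
    (fun t ht => (hφ t ht).continuousAt.continuousWithinAt)
    (fun t ht => (hφ t (Ico_subset_Icc_self ht)).hasDerivWithinAt)
    (by simp [Real.zero_rpow hp0]) (fun t _ => (hB t).continuousAt.continuousWithinAt)
    (fun t _ => (hB t).hasDerivWithinAt) (fun t ht => hφ' t (Ico_subset_Icc_self ht))
    (right_mem_Icc.mpr zero_le_one)
  simpa using hcomp

theorem stmt_1_general {n : ℕ} {S : Set (EuclideanSpace ℝ (Fin n))}
    (hS : Convex ℝ S)
    {f : EuclideanSpace ℝ (Fin n) → ℝ} {g : EuclideanSpace ℝ (Fin n) → EuclideanSpace ℝ (Fin n)}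
    (hf : ∀ x ∈ S, HasGradientAt f (g x) x)
    {p q M : ℝ} (hp : 1 < p) (hpq : 1 / p + 1 / q = 1) (hM : 0 < M)
    (hHolder : ∀ x ∈ S, ∀ y ∈ S, lpNorm q (g x - g y) ^ q ≤ M * lpNorm p (x - y) ^ p) :
    ∀ x ∈ S, ∀ y ∈ S,
      f y ≤ f x + ⟪g x, y - x⟫ + M ^ (1 / q) / p * lpNorm p (y - x) ^ p := by
  intro x hx y hy
  have hconj : p.HolderConjugate q := Real.holderConjugate_iff.mpr ⟨hp, by simpa using hpq⟩
  set v := y - x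
  set L := lpNorm p v
  have hL : 0 ≤ L := lpNorm_nonneg p v
  have hseg : ∀ t ∈ Icc (0 : ℝ) 1, x + t • v ∈ S := fun t ht => hS.add_smul_sub_mem hx hy ht
  have hslope : ∀ t ∈ Icc (0 : ℝ) 1,
      ⟪g (x + t • v), v⟫ ≤ ⟪g x, v⟫ + M ^ (1 / q) * L ^ p * t ^ (p - 1) := by
    intro t ht
    have hdist : lpNorm p (x + t • v - x) = t * L := by
      rw [add_sub_cancel_left, lpNorm_smul hconj.ne_zero, abs_of_nonneg ht.1]
    have hLp : L ^ (p - 1) * L = L ^ p := by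
      rw [← Real.rpow_add_one' hL (by linarith), sub_add_cancel]
    calc ⟪g (x + t • v), v⟫ ≤ ⟪g x, v⟫ + M ^ (1 / q) * (t * L) ^ (p - 1) * L := by
          rw [← hdist]
          exact inner_le_inner_add_of_lpNorm_sub_rpow_le hconj hM.le (hHolder _ (hseg t ht) x hx)
      _ = _ := by rw [Real.mul_rpow ht.1 hL, ← hLp]; ring
  have hcomp := le_add_of_hasDerivAt_le_add_mul_rpow hp.le
    (fun t ht => (hf _ (hseg t ht)).hasDerivAt_add_smul) hslope
  calc f y = f (x + (1 : ℝ) • v) := by simp [v]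
    _ ≤ f (x + (0 : ℝ) • v) + ⟪g x, v⟫ + M ^ (1 / q) * L ^ p / p := hcomp
    _ = _ := by rw [zero_smul, add_zero]; ring

theorem stmt_1 {n : ℕ} {S : Set (EuclideanSpace ℝ (Fin n))}
    (hS : Convex ℝ S)
    {f : EuclideanSpace ℝ (Fin n) → ℝ} {g : EuclideanSpace ℝ (Fin n) → EuclideanSpace ℝ (Fin n)}
    (hf : ∀ x ∈ S, HasGradientAt f (g x) x)
    {p q M : ℝ} (hp : 1 < p) (hq : 1 < q) (hpq : 1 / p + 1 / q = 1) (hM : 0 < M)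
    (hHolder : ∀ x ∈ S, ∀ y ∈ S, lpNorm q (g x - g y) ^ q ≤ M * lpNorm p (x - y) ^ p) :
    ∀ x ∈ S, ∀ y ∈ S,
      f y ≤ f x + ⟪g x, y - x⟫ + M ^ (1 / q) / p * lpNorm p (y - x) ^ p :=
  stmt_1_general hS hf hp hpq hM hHolder
end

section
/- For 1 < p ≤ 2, there exists λ > 0 such that for all real numbers u, v ≥ 0, v^p ≤ u^p + p u^{p-1}(v − u) + (λ/2)|v − u|^p. -/
/-!
Since `t ↦ t ^ (p - 1)` is subadditive on `[0, ∞)` for `0 ≤ p - 1 ≤ 1`, the derivative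
`t ↦ p t ^ (p - 1)` of `t ↦ t ^ p` satisfies `f' y - f' x ≤ p (y - x) ^ (p - 1)` for `0 ≤ x ≤ y`.
For any `f` with `f' y - f' x ≤ C (y - x) ^ α` whenever `x ≤ y`, the gap
`f u + f' u (x - u) + C / (α + 1) |x - u| ^ (α + 1) - f x` vanishes at `x = u`, and its
derivative has the sign of `x - u`, so it is nonnegative. With `C = p`, `α = p - 1` this is the
claim for `λ = 2`.
-/

open Real Set

lemma Real.rpow_sub_rpow_le_rpow_sub {q a b : ℝ} (hq0 : 0 ≤ q) (hq1 : q ≤ 1) (ha : 0 ≤ a)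
    (hab : a ≤ b) : b ^ q - a ^ q ≤ (b - a) ^ q := by
  have h := rpow_add_le_add_rpow (sub_nonneg.2 hab) ha hq0 hq1
  rw [sub_add_cancel] at h
  linarith

lemma le_add_deriv_mul_add_rpow_of_le {f f' : ℝ → ℝ} {C α u v : ℝ} (hα : 0 ≤ α) (huv : u ≤ v)
    (hf : ∀ x ∈ Icc u v, HasDerivAt f (f' x) x)
    (hf' : ∀ x ∈ Icc u v, f' x - f' u ≤ C * (x - u) ^ α) :
    f v ≤ f u + f' u * (v - u) + C / (α + 1) * (v - u) ^ (α + 1) := by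
  have hα1 : α + 1 ≠ 0 := by linarith
  set g : ℝ → ℝ := fun x => f u + f' u * (x - u) + C / (α + 1) * (x - u) ^ (α + 1) - f x
  have hg : ∀ x ∈ Icc u v, HasDerivAt g (f' u + C * (x - u) ^ α - f' x) x := by
    intro x hx
    have h := ((((hasDerivAt_id x).sub_const u).const_mul (f' u)).const_add (f u)).add
      ((((hasDerivAt_id x).sub_const u).rpow_const (p := α + 1) (Or.inr (by linarith))).const_mul
        (C / (α + 1)))
    refine (h.sub (hf x hx)).congr_deriv ?_
    simp only [id, add_sub_cancel_right]
    field_simp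
  have hmono : MonotoneOn g (Icc u v) :=
    monotoneOn_of_hasDerivWithinAt_nonneg (convex_Icc u v)
      (fun x hx => (hg x hx).continuousAt.continuousWithinAt)
      (fun x hx => (hg x (interior_subset hx)).hasDerivWithinAt)
      (fun x hx => by linarith [hf' x (interior_subset hx)])
  have h := hmono (left_mem_Icc.2 huv) (right_mem_Icc.2 huv) huv
  simp only [g, sub_self, mul_zero, add_zero, zero_rpow hα1] at h
  linarith

lemma le_add_deriv_mul_add_rpow_of_ge {f f' : ℝ → ℝ} {C α u v : ℝ} (hα : 0 ≤ α) (hvu : v ≤ u)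
    (hf : ∀ x ∈ Icc v u, HasDerivAt f (f' x) x)
    (hf' : ∀ x ∈ Icc v u, f' u - f' x ≤ C * (u - x) ^ α) :
    f v ≤ f u + f' u * (v - u) + C / (α + 1) * (u - v) ^ (α + 1) := by
  have h := le_add_deriv_mul_add_rpow_of_le (f := fun x => f (-x)) (f' := fun x => -f' (-x))
    (C := C) hα (neg_le_neg hvu)
    (fun x hx =>
      ((hf (-x) ⟨le_neg.2 hx.2, neg_le.1 hx.1⟩).comp x (hasDerivAt_neg' x)).congr_deriv
        (mul_neg_one _))
    (fun x hx => by
      simpa [sub_eq_add_neg, add_comm] using hf' (-x) ⟨le_neg.2 hx.2, neg_le.1 hx.1⟩)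
  simp only [neg_neg, neg_sub_neg, neg_mul] at h
  linarith

lemma le_add_deriv_mul_add_abs_rpow {f f' : ℝ → ℝ} {s : Set ℝ} {C α u v : ℝ} (hs : s.OrdConnected)
    (hα : 0 ≤ α) (hf : ∀ x ∈ s, HasDerivAt f (f' x) x)
    (hf' : ∀ x ∈ s, ∀ y ∈ s, x ≤ y → f' y - f' x ≤ C * (y - x) ^ α) (hu : u ∈ s) (hv : v ∈ s) :
    f v ≤ f u + f' u * (v - u) + C / (α + 1) * |v - u| ^ (α + 1) := by
  rcases le_total u v with huv | hvu
  · rw [abs_of_nonneg (sub_nonneg.2 huv)]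
    exact le_add_deriv_mul_add_rpow_of_le hα huv (fun x hx => hf x (hs.out hu hv hx))
      (fun x hx => hf' u hu x (hs.out hu hv hx) hx.1)
  · rw [abs_sub_comm, abs_of_nonneg (sub_nonneg.2 hvu)]
    exact le_add_deriv_mul_add_rpow_of_ge hα hvu (fun x hx => hf x (hs.out hv hu hx))
      (fun x hx => hf' x (hs.out hv hu hx) u hu hx.2)

theorem stmt_2 {p : ℝ} (hp1 : 1 < p) (hp2 : p ≤ 2) :
    ∃ l : ℝ, 0 < l ∧ ∀ u v : ℝ, 0 ≤ u → 0 ≤ v →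
      v ^ p ≤ u ^ p + p * u ^ (p - 1) * (v - u) + l / 2 * |v - u| ^ p := by
  refine ⟨2, two_pos, fun u v hu hv => ?_⟩
  have hderiv_holder : ∀ x ∈ Ici (0 : ℝ), ∀ y ∈ Ici 0, x ≤ y →
      p * y ^ (p - 1) - p * x ^ (p - 1) ≤ p * (y - x) ^ (p - 1) := fun x hx y _ hxy => by
    rw [← mul_sub]
    exact mul_le_mul_of_nonneg_left
      (rpow_sub_rpow_le_rpow_sub (by linarith) (by linarith) hx hxy) (by linarith)
  have h := le_add_deriv_mul_add_abs_rpow ordConnected_Ici (sub_nonneg.2 hp1.le)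
    (fun x _ => hasDerivAt_rpow_const (Or.inr hp1.le)) hderiv_holder (mem_Ici.2 hu) (mem_Ici.2 hv)
  rw [sub_add_cancel, div_self (by linarith)] at h
  linarith
end

section
/- Fix 1 < p ≤ 2. The function g(k) defined by g(1) = 0 and g(k) = (k^p − 1 − p(k−1))/|k−1|^p for k ≠ 1 is bounded above on [0, ∞); in particular lim_{k→∞} g(k) = 1. -/
open Filter Topology

/-!
The bound `g ≤ 1` is the inequality `k ^ p ≤ 1 + p (k - 1) + |k - 1| ^ p`. On either side of
`k = 1` the difference of the two sides vanishes at the endpoint and is monotone, because its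
derivative has the sign of a subadditivity defect of `t ↦ t ^ (p - 1)`, and `0 ≤ p - 1 ≤ 1`.
For the limit, dividing by `(k - 1) ^ p` leaves `(k / (k - 1)) ^ p → 1` minus terms of order
`(k - 1) ^ (1 - p) → 0`.
-/

namespace Real

variable {p : ℝ}

theorem one_add_rpow_le (hp1 : 1 ≤ p) (hp2 : p ≤ 2) {s : ℝ} (hs : 0 ≤ s) :
    (1 + s) ^ p ≤ 1 + p * s + s ^ p := by
  let f : ℝ → ℝ := fun s ↦ 1 + p * s + s ^ p - (1 + s) ^ p
  have hf (x : ℝ) : HasDerivAt f (p * (1 + x ^ (p - 1) - (1 + x) ^ (p - 1))) x := by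
    refine (((((hasDerivAt_id x).const_mul p).const_add 1).add
      ((hasDerivAt_id x).rpow_const (Or.inr hp1))).sub
      (((hasDerivAt_id x).const_add 1).rpow_const (Or.inr hp1))).congr_deriv ?_
    simp only [id]
    ring
  have hmono : MonotoneOn f (Set.Ici 0) := by
    refine monotoneOn_of_deriv_nonneg (convex_Ici 0)
      (fun x _ ↦ (hf x).continuousAt.continuousWithinAt)
      (fun x _ ↦ (hf x).differentiableAt.differentiableWithinAt) fun x hx ↦ ?_
    rw [interior_Ici] at hx
    have hsub := rpow_add_le_add_rpow zero_le_one hx.le (by linarith) (by linarith : p - 1 ≤ 1)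
    rw [one_rpow] at hsub
    rw [(hf x).deriv]
    exact mul_nonneg (by linarith) (by linarith)
  have := hmono Set.self_mem_Ici hs hs
  simp only [f, mul_zero, add_zero, zero_rpow (by linarith : p ≠ 0), one_rpow, sub_self] at this
  linarith

theorem one_sub_rpow_le (hp1 : 1 ≤ p) (hp2 : p ≤ 2) {t : ℝ} (ht0 : 0 ≤ t) (ht1 : t ≤ 1) :
    (1 - t) ^ p ≤ 1 - p * t + t ^ p := by
  let f : ℝ → ℝ := fun t ↦ 1 - p * t + t ^ p - (1 - t) ^ p
  have hf (x : ℝ) : HasDerivAt f (p * (x ^ (p - 1) + (1 - x) ^ (p - 1) - 1)) x := by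
    refine (((((hasDerivAt_id x).const_mul p).const_sub 1).add
      ((hasDerivAt_id x).rpow_const (Or.inr hp1))).sub
      (((hasDerivAt_id x).const_sub 1).rpow_const (Or.inr hp1))).congr_deriv ?_
    simp only [id]
    ring
  have hmono : MonotoneOn f (Set.Icc 0 1) := by
    refine monotoneOn_of_deriv_nonneg (convex_Icc 0 1)
      (fun x _ ↦ (hf x).continuousAt.continuousWithinAt)
      (fun x _ ↦ (hf x).differentiableAt.differentiableWithinAt) fun x hx ↦ ?_
    rw [interior_Icc] at hx
    have hsub := rpow_add_le_add_rpow hx.1.le (sub_nonneg.2 hx.2.le) (by linarith)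
      (by linarith : p - 1 ≤ 1)
    rw [add_sub_cancel, one_rpow] at hsub
    rw [(hf x).deriv]
    exact mul_nonneg (by linarith) (by linarith)
  have := hmono (Set.left_mem_Icc.2 zero_le_one) ⟨ht0, ht1⟩ ht0
  simp only [f, mul_zero, sub_zero, add_zero, zero_rpow (by linarith : p ≠ 0), one_rpow,
    sub_self] at this
  linarith

theorem rpow_sub_one_sub_mul_le_abs_sub_one_rpow (hp1 : 1 ≤ p) (hp2 : p ≤ 2) {k : ℝ}
    (hk : 0 ≤ k) : k ^ p - 1 - p * (k - 1) ≤ |k - 1| ^ p := by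
  rcases le_total k 1 with hk1 | hk1
  · have := one_sub_rpow_le hp1 hp2 (sub_nonneg.2 hk1) (by linarith)
    rw [sub_sub_cancel] at this
    rw [abs_of_nonpos (by linarith), neg_sub]
    linarith
  · have := one_add_rpow_le hp1 hp2 (sub_nonneg.2 hk1)
    rw [add_sub_cancel] at this
    rw [abs_of_nonneg (by linarith)]
    linarith

theorem tendsto_add_one_rpow_sub_div_rpow_atTop (hp : 1 < p) :
    Tendsto (fun x : ℝ ↦ ((x + 1) ^ p - 1 - p * x) / x ^ p) atTop (𝓝 1) := by
  have hlim : Tendsto (fun x : ℝ ↦ (1 + x⁻¹) ^ p - x ^ (-p) - p * x ^ (-(p - 1))) atTop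
      (𝓝 ((1 + 0) ^ p - 0 - p * 0)) :=
    ((((tendsto_inv_atTop_zero.const_add 1).rpow_const (Or.inl (by norm_num))).sub
      (tendsto_rpow_neg_atTop (by linarith))).sub
      ((tendsto_rpow_neg_atTop (by linarith)).const_mul p))
  rw [add_zero, one_rpow, sub_zero, mul_zero, sub_zero] at hlim
  refine hlim.congr' ?_
  filter_upwards [eventually_gt_atTop 0] with x hx
  have hxp : x ^ p ≠ 0 := (rpow_pos_of_pos hx p).ne'
  have hx1 : 1 + x⁻¹ = (x + 1) / x := by field_simp
  rw [hx1, div_rpow (by positivity) hx.le, rpow_neg hx.le, neg_sub, rpow_sub hx, rpow_one]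
  field_simp

end Real

theorem stmt_3 {p : ℝ} (hp1 : 1 < p) (hp2 : p ≤ 2)
    {g : ℝ → ℝ} (hg1 : g 1 = 0)
    (hg : ∀ k : ℝ, k ≠ 1 → g k = (k ^ p - 1 - p * (k - 1)) / |k - 1| ^ p) :
    (∃ C : ℝ, ∀ k ∈ Set.Ici (0 : ℝ), g k ≤ C) ∧ Tendsto g atTop (nhds 1) := by
  refine ⟨⟨1, fun k hk ↦ ?_⟩, ?_⟩
  · rcases eq_or_ne k 1 with rfl | hk1
    · exact hg1.trans_le zero_le_one
    rw [hg k hk1, div_le_one (Real.rpow_pos_of_pos (abs_sub_pos.2 hk1) p)]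
    exact Real.rpow_sub_one_sub_mul_le_abs_sub_one_rpow hp1.le hp2 hk
  · refine ((Real.tendsto_add_one_rpow_sub_div_rpow_atTop hp1).comp
      (tendsto_atTop_add_const_right _ (-1) tendsto_id)).congr' ?_
    filter_upwards [eventually_gt_atTop 1] with k hk
    rw [hg k hk.ne', abs_of_pos (sub_pos.2 hk)]
    simp only [Function.comp_apply, id, ← sub_eq_add_neg, sub_add_cancel]
end

section
/- Let p ≥ 2 be a real number. For any real numbers a, b, c, (sign(a−c)|a−c|^{p−1} − sign(b−c)|b−c|^{p−1})(a − b) ≥ (1/2)^{p−2} |a − b|^p. -/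
/-!
Write `φ(t) = sign t · |t|^q` with `q = p - 1 ≥ 1`; it suffices to show
`φ x - φ y ≥ 2^(1-q) (x - y)^q` for `y ≤ x` and multiply by `x - y`. When `x` and `y` have the
same sign (by oddness of `φ`, both nonnegative) this is superadditivity of `t ↦ t^q`, even with
constant `1`; when `y < 0 < x` it is the power-mean inequality `(u + v)^q ≤ 2^(q-1) (u^q + v^q)`
for `u = x`, `v = -y`.
-/

open Real

namespace Real

lemma rpow_add_le_two_rpow_mul_add_rpow {q u v : ℝ} (hu : 0 ≤ u) (hv : 0 ≤ v) (hq : 1 ≤ q) :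
    (u + v) ^ q ≤ 2 ^ (q - 1) * (u ^ q + v ^ q) := by
  lift u to NNReal using hu
  lift v to NNReal using hv
  exact_mod_cast NNReal.rpow_add_le_mul_rpow_add_rpow u v hq

end Real

noncomputable def signedRpow (q t : ℝ) : ℝ := Real.sign t * |t| ^ q

section signedRpow

variable {q x y : ℝ}

lemma signedRpow_neg (q t : ℝ) : signedRpow q (-t) = -signedRpow q t := by
  simp only [signedRpow, Real.sign_neg, abs_neg, neg_mul]

lemma signedRpow_of_nonneg (hq : q ≠ 0) {t : ℝ} (ht : 0 ≤ t) : signedRpow q t = t ^ q := by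
  rcases ht.eq_or_lt with rfl | ht
  · simp [signedRpow, Real.zero_rpow hq]
  · rw [signedRpow, Real.sign_of_pos ht, abs_of_pos ht, one_mul]

lemma signedRpow_of_nonpos (hq : q ≠ 0) {t : ℝ} (ht : t ≤ 0) : signedRpow q t = -(-t) ^ q := by
  rw [← signedRpow_of_nonneg hq (neg_nonneg.mpr ht), signedRpow_neg, neg_neg]

lemma sub_rpow_le_signedRpow_sub_of_nonneg (hq : 1 ≤ q) (hy : 0 ≤ y) (hyx : y ≤ x) :
    (x - y) ^ q ≤ signedRpow q x - signedRpow q y := by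
  have hq0 : q ≠ 0 := by positivity
  rw [signedRpow_of_nonneg hq0 (hy.trans hyx), signedRpow_of_nonneg hq0 hy, le_sub_iff_add_le]
  simpa using Real.add_rpow_le_rpow_add (sub_nonneg.mpr hyx) hy hq

lemma half_rpow_mul_sub_rpow_le_signedRpow_sub (hq : 1 ≤ q) (hyx : y ≤ x) :
    (1 / 2 : ℝ) ^ (q - 1) * (x - y) ^ q ≤ signedRpow q x - signedRpow q y := by
  have hq0 : q ≠ 0 := by positivity
  have hdiff : 0 ≤ (x - y) ^ q := Real.rpow_nonneg (sub_nonneg.mpr hyx) q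
  have hhalf : (1 / 2 : ℝ) ^ (q - 1) ≤ 1 := Real.rpow_le_one (by norm_num) (by norm_num) (by linarith)
  have hshrink : (1 / 2 : ℝ) ^ (q - 1) * (x - y) ^ q ≤ (x - y) ^ q :=
    mul_le_of_le_one_left hdiff hhalf
  rcases le_or_gt 0 y with hy | hy
  · exact hshrink.trans (sub_rpow_le_signedRpow_sub_of_nonneg hq hy hyx)
  rcases le_or_gt x 0 with hx | hx
  · have h := sub_rpow_le_signedRpow_sub_of_nonneg hq (neg_nonneg.mpr hx) (neg_le_neg hyx)
    rw [signedRpow_neg, signedRpow_neg, neg_sub_neg, neg_sub_neg] at h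
    exact hshrink.trans h
  · have hmean := Real.rpow_add_le_two_rpow_mul_add_rpow hx.le (neg_nonneg.mpr hy.le) hq
    have htwo : (1 / 2 : ℝ) ^ (q - 1) * 2 ^ (q - 1) = 1 := by
      rw [← Real.mul_rpow (by norm_num) (by norm_num)]
      norm_num
    rw [signedRpow_of_nonneg hq0 hx.le, signedRpow_of_nonpos hq0 hy.le, sub_neg_eq_add]
    calc (1 / 2 : ℝ) ^ (q - 1) * (x - y) ^ q
        ≤ (1 / 2 : ℝ) ^ (q - 1) * (2 ^ (q - 1) * (x ^ q + (-y) ^ q)) := by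
          gcongr; rwa [sub_eq_add_neg x y]
      _ = x ^ q + (-y) ^ q := by rw [← mul_assoc, htwo, one_mul]

end signedRpow

theorem stmt_4 {p : ℝ} (hp : 2 ≤ p) (a b c : ℝ) :
    (Real.sign (a - c) * |a - c| ^ (p - 1) - Real.sign (b - c) * |b - c| ^ (p - 1)) * (a - b)
      ≥ (1 / 2 : ℝ) ^ (p - 2) * |a - b| ^ p := by
  change (signedRpow (p - 1) (a - c) - signedRpow (p - 1) (b - c)) * (a - b) ≥ _
  wlog hba : b ≤ a generalizing a b
  · have h := this b a (le_of_not_ge hba)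
    rw [abs_sub_comm]
    linarith
  have hab : 0 ≤ a - b := sub_nonneg.mpr hba
  have hmono := half_rpow_mul_sub_rpow_le_signedRpow_sub (q := p - 1) (by linarith)
    (sub_le_sub_right hba c)
  rw [sub_sub_sub_cancel_right, show p - 1 - 1 = p - 2 by ring] at hmono
  calc (1 / 2 : ℝ) ^ (p - 2) * |a - b| ^ p
      = (1 / 2 : ℝ) ^ (p - 2) * (a - b) ^ (p - 1) * (a - b) := by
        rw [abs_of_nonneg hab, mul_assoc, ← Real.rpow_add_one' hab (by linarith), sub_add_cancel]
    _ ≤ _ := mul_le_mul_of_nonneg_right hmono hab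
end

section
/- Let S ⊆ ℝⁿ be convex, p ≥ 2 an integer with conjugate q (1/p + 1/q = 1), λ > 0, z ∈ ℝⁿ, h : ℝⁿ → ℝ convex, and g₁, g₂ ∈ ℝⁿ. Let xᵢ* be a minimizer over S of x ↦ gᵢᵀ(x − z) + (λ/2)‖x − z‖_p^p + h(x), i = 1, 2. Then (1/2)^p ‖x₁* − x₂*‖_p^p ≤ (1/(λ p))^q ‖g₁ − g₂‖_q^q. -/
/-!
Write `Φ(v) = ‖v‖_p^p`, whose gradient has coordinates `p |vᵢ|^(p-2) vᵢ`. Testing the first-order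
optimality condition of each minimizer against the other one and adding the two inequalities
cancels `h` and gives `(λ/2) ⟪∇Φ(x₁ - z) - ∇Φ(x₂ - z), x₁ - x₂⟫ ≤ ⟪g₂ - g₁, x₁ - x₂⟫`.
Coordinatewise, `|a - b|^p ≤ 2^(p-2) (|a|^(p-2) a - |b|^(p-2) b)(a - b)`, so the left side is at
least `λ p 2^(1-p) ‖x₁ - x₂‖_p^p`, while Hölder bounds the right side by
`‖x₁ - x₂‖_p ‖g₁ - g₂‖_q`. With `u = ‖x₁ - x₂‖_p / 2` and `v = ‖g₁ - g₂‖_q / (λ p)` this reads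
`u^p ≤ u v`, hence `u^(p-1) ≤ v` and `u^p = (u^(p-1))^q ≤ v^q`.
-/

open scoped RealInnerProductSpace

open Set

theorem Real.rpow_le_rpow_conj_of_rpow_le_mul {p q u v : ℝ} (hpq : p.HolderConjugate q)
    (hu : 0 ≤ u) (hv : 0 ≤ v) (h : u ^ p ≤ u * v) : u ^ p ≤ v ^ q := by
  rcases hu.eq_or_lt with rfl | hu
  · rw [Real.zero_rpow hpq.ne_zero]
    exact Real.rpow_nonneg hv q
  have h1 : u ^ (p - 1) ≤ v := by
    rwa [Real.rpow_sub_one hu.ne', div_le_iff₀ hu, mul_comm]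
  calc u ^ p = (u ^ (p - 1)) ^ q := by rw [← Real.rpow_mul hu.le, hpq.sub_one_mul_conj]
    _ ≤ v ^ q := Real.rpow_le_rpow (by positivity) h1 hpq.symm.nonneg

theorem Real.half_rpow_mul_rpow_le_of_mul_rpow_le {p q c D G : ℝ} (hpq : p.HolderConjugate q)
    (hc : 0 < c) (hD : 0 ≤ D) (hG : 0 ≤ G) (h : 2 * c * D ^ p ≤ 2 ^ p * (G * D)) :
    (1 / 2) ^ p * D ^ p ≤ (1 / c) ^ q * G ^ q := by
  have key : (D / 2) ^ p ≤ D / 2 * (G / c) := by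
    rw [Real.div_rpow hD zero_le_two, div_le_iff₀ (by positivity)]
    field_simp
    linarith
  calc (1 / 2) ^ p * D ^ p = (D / 2) ^ p := by
        rw [← Real.mul_rpow (by norm_num) hD, one_div_mul_eq_div]
    _ ≤ (G / c) ^ q := Real.rpow_le_rpow_conj_of_rpow_le_mul hpq (by positivity) (by positivity) key
    _ = (1 / c) ^ q * G ^ q := by rw [← Real.mul_rpow (by positivity) hG, one_div_mul_eq_div]

theorem IsMinOn.hasDerivAt_add_sub_nonneg {E : Type*} [AddCommGroup E] [Module ℝ E] {S : Set E}
    (hS : Convex ℝ S) {φ h : E → ℝ} (hh : ConvexOn ℝ S h) {x y : E} (hx : x ∈ S) (hy : y ∈ S)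
    (hmin : IsMinOn (fun w => φ w + h w) S x) {d : ℝ}
    (hd : HasDerivAt (fun t : ℝ => φ (x + t • (y - x))) d 0) :
    0 ≤ d + (h y - h x) := by
  -- `ψ` majorizes `t ↦ (φ + h)(x + t • (y - x)) - h x` on `[0, 1]` and agrees with it at `0`.
  set ψ : ℝ → ℝ := fun t => φ (x + t • (y - x)) + t * (h y - h x)
  have hψ : HasDerivAt ψ (d + (h y - h x)) 0 := by
    simpa only [one_mul] using hd.fun_add ((hasDerivAt_id' (0 : ℝ)).mul_const (h y - h x))
  have hψmin : IsMinOn ψ (Icc 0 1) 0 := by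
    intro t ht
    have hconv : h (x + t • (y - x)) ≤ h x + t * (h y - h x) := by
      have := hh.2 hx hy (sub_nonneg.2 ht.2) ht.1 (sub_add_cancel 1 t)
      rw [show (1 - t) • x + t • y = x + t • (y - x) by module, smul_eq_mul, smul_eq_mul] at this
      linarith
    have := hmin (hS.add_smul_sub_mem hx hy ht)
    simp only [mem_ofPred_eq, ψ, zero_smul, add_zero, zero_mul] at this ⊢
    linarith
  have hone : (1 : ℝ) ∈ posTangentConeAt (Icc 0 1) 0 :=
    mem_posTangentConeAt_of_segment_subset (by simp [segment_eq_Icc])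
  simpa using hψmin.localize.hasFDerivWithinAt_nonneg hψ.hasFDerivAt.hasFDerivWithinAt hone

theorem hasDerivAt_abs_pow {p : ℕ} (hp : 2 ≤ p) (s : ℝ) :
    HasDerivAt (fun t : ℝ => |t| ^ p) (p * |s| ^ (p - 2) * s) s := by
  have := hasDerivAt_abs_rpow s (p := p) (by exact_mod_cast hp)
  simp only [Real.rpow_natCast] at this
  rwa [← Nat.cast_ofNat, ← Nat.cast_sub hp, Real.rpow_natCast] at this

theorem two_mul_add_pow_le {a b : ℝ} (ha : 0 ≤ a) (hb : 0 ≤ b) :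
    ∀ m : ℕ, 2 * (a + b) ^ m ≤ 2 ^ m * (a ^ m + b ^ m)
  | 0 => by norm_num
  | m + 1 => by
    have := add_pow_le ha hb (m + 1)
    rw [Nat.add_sub_cancel] at this
    rw [pow_succ' (2 : ℝ) m]
    linarith

theorem abs_sub_pow_le_two_pow_mul {p : ℕ} (hp : 2 ≤ p) (a b : ℝ) :
    |a - b| ^ p ≤ 2 ^ (p - 2) * ((|a| ^ (p - 2) * a - |b| ^ (p - 2) * b) * (a - b)) := by
  set A := |a| ^ (p - 2)
  set B := |b| ^ (p - 2)
  have hsign : 0 ≤ (A - B) * (a ^ 2 - b ^ 2) := by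
    rw [← sq_abs a, ← sq_abs b]
    rcases le_total |a| |b| with hab | hab
    · exact mul_nonneg_of_nonpos_of_nonpos
        (sub_nonpos.2 (pow_le_pow_left₀ (abs_nonneg a) hab _))
        (sub_nonpos.2 (pow_le_pow_left₀ (abs_nonneg a) hab 2))
    · exact mul_nonneg (sub_nonneg.2 (pow_le_pow_left₀ (abs_nonneg b) hab _))
        (sub_nonneg.2 (pow_le_pow_left₀ (abs_nonneg b) hab 2))
  -- `2 (A a - B b)(a - b) - (A + B)(a - b)² = (A - B)(a² - b²)`
  have hsym : (A + B) * (a - b) ^ 2 ≤ 2 * ((A * a - B * b) * (a - b)) := by nlinarith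
  calc |a - b| ^ p = |a - b| ^ (p - 2) * (a - b) ^ 2 := by
        rw [← sq_abs, ← pow_add, Nat.sub_add_cancel hp]
    _ ≤ (|a| + |b|) ^ (p - 2) * (a - b) ^ 2 := by
        gcongr
        exact abs_sub _ _
    _ ≤ 2 ^ (p - 2) * (A + B) / 2 * (a - b) ^ 2 := by
        gcongr
        linarith [two_mul_add_pow_le (abs_nonneg a) (abs_nonneg b) (p - 2)]
    _ ≤ 2 ^ (p - 2) * ((A * a - B * b) * (a - b)) := by
        have h2 : (0 : ℝ) ≤ 2 ^ (p - 2) := by positivity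
        nlinarith

namespace lpNorm

variable {n : ℕ}

theorem nonneg (p : ℝ) (v : EuclideanSpace ℝ (Fin n)) : 0 ≤ lpNorm p v :=
  Real.rpow_nonneg (Finset.sum_nonneg fun _ _ => Real.rpow_nonneg (abs_nonneg _) _) _

theorem sub_comm (p : ℝ) (v w : EuclideanSpace ℝ (Fin n)) :
    lpNorm p (v - w) = lpNorm p (w - v) := by
  simp only [lpNorm, PiLp.sub_apply, abs_sub_comm]

theorem pow_natCast {p : ℕ} (hp : p ≠ 0) (v : EuclideanSpace ℝ (Fin n)) :
    lpNorm p v ^ p = ∑ i, |v i| ^ p := by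
  rw [lpNorm, ← Real.rpow_natCast, ← Real.rpow_mul
      (Finset.sum_nonneg fun _ _ => Real.rpow_nonneg (abs_nonneg _) _),
    one_div_mul_cancel (Nat.cast_ne_zero.2 hp), Real.rpow_one]
  simp only [Real.rpow_natCast]

theorem inner_le_mul_lpNorm {p q : ℝ} (hpq : p.HolderConjugate q)
    (v w : EuclideanSpace ℝ (Fin n)) : ⟪v, w⟫ ≤ lpNorm p v * lpNorm q w := by
  simpa [lpNorm, PiLp.inner_apply, mul_comm] using
    Real.inner_le_Lp_mul_Lq Finset.univ (fun i => v i) (fun i => w i) hpq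

end lpNorm

section lpPowGrad

variable {n : ℕ}

noncomputable def lpPowGrad (p : ℕ) (v : EuclideanSpace ℝ (Fin n)) : EuclideanSpace ℝ (Fin n) :=
  WithLp.toLp 2 fun i => p * |v i| ^ (p - 2) * v i

theorem hasDerivAt_lpNorm_add_smul_pow {p : ℕ} (hp : 2 ≤ p) (v w : EuclideanSpace ℝ (Fin n)) :
    HasDerivAt (fun t : ℝ => lpNorm p (v + t • w) ^ p) ⟪lpPowGrad p v, w⟫ 0 := by
  simp only [lpNorm.pow_natCast (by omega : p ≠ 0), PiLp.add_apply, PiLp.smul_apply, smul_eq_mul]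
  have hgrad : ⟪lpPowGrad p v, w⟫
      = ∑ i, p * |v i + 0 * w i| ^ (p - 2) * (v i + 0 * w i) * w i := by
    simp [lpPowGrad, PiLp.inner_apply, mul_comm]
  rw [hgrad]
  refine HasDerivAt.fun_sum fun i _ => ?_
  exact (hasDerivAt_abs_pow hp _).comp 0
    (((hasDerivAt_id' 0).mul_const (w i)).const_add (v i)) |>.congr_deriv (by ring)

theorem lpNorm_sub_pow_le_inner_lpPowGrad {p : ℕ} (hp : 2 ≤ p) (a b : EuclideanSpace ℝ (Fin n)) :
    p * lpNorm p (a - b) ^ p ≤ 2 ^ (p - 2) * ⟪lpPowGrad p a - lpPowGrad p b, a - b⟫ := by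
  rw [lpNorm.pow_natCast (by omega : p ≠ 0), Finset.mul_sum]
  simp only [PiLp.inner_apply, PiLp.sub_apply, lpPowGrad, Finset.mul_sum, RCLike.inner_apply,
    conj_trivial]
  refine Finset.sum_le_sum fun i _ => ?_
  have := abs_sub_pow_le_two_pow_mul hp (a i) (b i)
  have hp0 : (0 : ℝ) ≤ p := by positivity
  nlinarith

theorem IsMinOn.inner_add_lpPowGrad_nonneg {p : ℕ} (hp : 2 ≤ p)
    {S : Set (EuclideanSpace ℝ (Fin n))} (hS : Convex ℝ S) {lam : ℝ}
    {g z x y : EuclideanSpace ℝ (Fin n)} {h : EuclideanSpace ℝ (Fin n) → ℝ}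
    (hh : ConvexOn ℝ S h) (hx : x ∈ S) (hy : y ∈ S)
    (hmin : IsMinOn (fun w => ⟪g, w - z⟫ + lam / 2 * lpNorm p (w - z) ^ (p : ℝ) + h w) S x) :
    0 ≤ ⟪g, y - x⟫ + lam / 2 * ⟪lpPowGrad p (x - z), y - x⟫ + (h y - h x) := by
  refine hmin.hasDerivAt_add_sub_nonneg hS hh hx hy ?_
  simp only [Real.rpow_natCast, add_sub_right_comm x, inner_add_right, real_inner_smul_right]
  refine HasDerivAt.fun_add ?_ ((hasDerivAt_lpNorm_add_smul_pow hp _ _).const_mul _)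
  simpa using ((hasDerivAt_id' (0 : ℝ)).mul_const ⟪g, y - x⟫).const_add ⟪g, x - z⟫

theorem IsMinOn.mul_inner_lpPowGrad_sub_le_inner_sub {p : ℕ} (hp : 2 ≤ p)
    {S : Set (EuclideanSpace ℝ (Fin n))} (hS : Convex ℝ S) {lam : ℝ}
    {z g₁ g₂ x₁ x₂ : EuclideanSpace ℝ (Fin n)} {h : EuclideanSpace ℝ (Fin n) → ℝ}
    (hh : ConvexOn ℝ S h) (hx₁ : x₁ ∈ S) (hx₂ : x₂ ∈ S)
    (hmin₁ : IsMinOn (fun x => ⟪g₁, x - z⟫ + lam / 2 * lpNorm p (x - z) ^ (p : ℝ) + h x) S x₁)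
    (hmin₂ : IsMinOn (fun x => ⟪g₂, x - z⟫ + lam / 2 * lpNorm p (x - z) ^ (p : ℝ) + h x) S x₂) :
    lam / 2 * ⟪lpPowGrad p (x₁ - z) - lpPowGrad p (x₂ - z), x₁ - x₂⟫ ≤ ⟪g₂ - g₁, x₁ - x₂⟫ := by
  have hopt₁ := hmin₁.inner_add_lpPowGrad_nonneg hp hS hh hx₁ hx₂
  have hopt₂ := hmin₂.inner_add_lpPowGrad_nonneg hp hS hh hx₂ hx₁
  simp only [inner_sub_left, inner_sub_right] at hopt₁ hopt₂ ⊢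
  linarith

end lpPowGrad

theorem stmt_7 {n : ℕ} {S : Set (EuclideanSpace ℝ (Fin n))}
    (hS : Convex ℝ S)
    {p : ℕ} (hp : 2 ≤ p) {q : ℝ} (hpq : 1 / (p : ℝ) + 1 / q = 1)
    {lam : ℝ} (hlam : 0 < lam)
    (z g₁ g₂ : EuclideanSpace ℝ (Fin n))
    {h : EuclideanSpace ℝ (Fin n) → ℝ} (hh : ConvexOn ℝ Set.univ h)
    {x₁ x₂ : EuclideanSpace ℝ (Fin n)} (hx₁ : x₁ ∈ S) (hx₂ : x₂ ∈ S)
    (hmin₁ : IsMinOn (fun x => ⟪g₁, x - z⟫ + lam / 2 * lpNorm p (x - z) ^ (p : ℝ) + h x) S x₁)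
    (hmin₂ : IsMinOn (fun x => ⟪g₂, x - z⟫ + lam / 2 * lpNorm p (x - z) ^ (p : ℝ) + h x) S x₂) :
    (1 / 2 : ℝ) ^ (p : ℝ) * lpNorm p (x₁ - x₂) ^ (p : ℝ)
      ≤ (1 / (lam * p)) ^ q * lpNorm q (g₁ - g₂) ^ q := by
  have hpq' : (p : ℝ).HolderConjugate q :=
    Real.holderConjugate_iff.2 ⟨by exact_mod_cast hp, by simpa only [one_div] using hpq⟩
  have hgap := hmin₁.mul_inner_lpPowGrad_sub_le_inner_sub hp hS (hh.subset (subset_univ S) hS)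
    hx₁ hx₂ hmin₂
  have hmono := lpNorm_sub_pow_le_inner_lpPowGrad hp (x₁ - z) (x₂ - z)
  rw [sub_sub_sub_cancel_right] at hmono
  have hholder := lpNorm.inner_le_mul_lpNorm hpq'.symm (g₂ - g₁) (x₁ - x₂)
  rw [lpNorm.sub_comm q] at hholder
  set D := lpNorm p (x₁ - x₂)
  set G := lpNorm q (g₁ - g₂)
  set M := ⟪lpPowGrad p (x₁ - z) - lpPowGrad p (x₂ - z), x₁ - x₂⟫
  have hlin : 2 * (lam * p) * D ^ p ≤ 2 ^ p * (G * D) :=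
    calc 2 * (lam * p) * D ^ p = 2 * lam * (p * D ^ p) := by ring
      _ ≤ 2 * lam * (2 ^ (p - 2) * M) := by gcongr
      _ = 2 ^ (p - 2) * 4 * (lam / 2 * M) := by ring
      _ ≤ 2 ^ (p - 2) * 4 * (G * D) :=
          mul_le_mul_of_nonneg_left (hgap.trans hholder) (by positivity)
      _ = 2 ^ p * (G * D) := by rw [← pow_sub_mul_pow 2 hp]; ring
  exact Real.half_rpow_mul_rpow_le_of_mul_rpow_le hpq' (by positivity) (lpNorm.nonneg _ _)
    (lpNorm.nonneg _ _) (by simpa only [Real.rpow_natCast] using hlin)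
end

section
/- Let S ⊆ ℝⁿ be convex compact, f differentiable, h convex, γ > 0. Let x⁺ = argmin_{y∈S}{∇f(x)ᵀy + (1/(2γ))‖y − x‖₂² + h(y)} and P_S(x,γ) = (x − x⁺)/γ. If ∇f(x)ᵀ(y − x) + h(y) − h(x) ≥ −ε for all y ∈ S, then ‖P_S(x,γ)‖₂² ≤ ε/γ. -/
/-!
Moving from the prox point `xp` towards `x` along the segment, which stays in `S`, cannot
decrease the prox objective. Since `h` is convex and the quadratic term shrinks by the factor
`(1 - t)²`, this gives `(2 - t) ‖x - xp‖² ≤ 2γ (⟪g, x - xp⟫ + h x - h xp)` for `t ∈ (0, 1]`, and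
letting `t → 0` the three-point inequality `‖x - xp‖² ≤ γ (⟪g, x - xp⟫ + h x - h xp)`. The
`ε`-stationarity hypothesis at `y = xp` bounds the right-hand side by `γ ε`.
-/

open scoped RealInnerProductSpace
open Filter Topology

variable {E : Type*} [NormedAddCommGroup E] [InnerProductSpace ℝ E]

theorem two_mul_le_of_forall_sub_mul_le {a b : ℝ} (h : ∀ t : ℝ, 0 < t → t ≤ 1 → (2 - t) * a ≤ b) :
    2 * a ≤ b := by
  have hlim : Tendsto (fun t : ℝ => (2 - t) * a) (𝓝[>] 0) (𝓝 (2 * a)) := by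
    have := ((continuous_const.sub continuous_id).mul continuous_const).tendsto (0 : ℝ)
      (f := fun t : ℝ => (2 - t) * a)
    simpa using this.mono_left nhdsWithin_le_nhds
  refine le_of_tendsto hlim ?_
  filter_upwards [Ioo_mem_nhdsGT one_pos] with t ht using h t ht.1 ht.2.le

theorem IsMinOn.sub_mul_norm_sub_sq_le {S : Set E} (hS : Convex ℝ S) {h : E → ℝ}
    (hh : ConvexOn ℝ S h) {g x xp : E} {gam : ℝ} (hgam : 0 < gam) (hx : x ∈ S) (hxp : xp ∈ S)
    (hmin : IsMinOn (fun y => ⟪g, y⟫ + 1 / (2 * gam) * ‖y - x‖ ^ 2 + h y) S xp)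
    {t : ℝ} (ht0 : 0 < t) (ht1 : t ≤ 1) :
    (2 - t) * ‖x - xp‖ ^ 2 ≤ 2 * gam * (⟪g, x - xp⟫ + h x - h xp) := by
  set y := (1 - t) • xp + t • x
  have hyS : y ∈ S := hS hxp hx (by linarith) ht0.le (by ring)
  have hle := isMinOn_iff.1 hmin y hyS
  have hlin : ⟪g, y⟫ = (1 - t) * ⟪g, xp⟫ + t * ⟪g, x⟫ := by
    simp only [y, inner_add_right, real_inner_smul_right]
  have hdist : ‖y - x‖ ^ 2 = (1 - t) ^ 2 * ‖x - xp‖ ^ 2 := by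
    have : y - x = (1 - t) • (xp - x) := by module
    rw [this, norm_smul, mul_pow, Real.norm_eq_abs, sq_abs, norm_sub_rev]
  have hconv : h y ≤ (1 - t) * h xp + t * h x :=
    hh.2 hxp hx (by linarith) ht0.le (by ring)
  simp only [hlin, hdist, norm_sub_rev xp x] at hle
  have hgain : 1 / (2 * gam) * (t * ((2 - t) * ‖x - xp‖ ^ 2)) ≤
      t * (⟪g, x - xp⟫ + h x - h xp) := by
    rw [inner_sub_right]
    linarith
  have hscaled : t * ((2 - t) * ‖x - xp‖ ^ 2) ≤ t * (2 * gam * (⟪g, x - xp⟫ + h x - h xp)) :=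
    calc t * ((2 - t) * ‖x - xp‖ ^ 2)
        = 2 * gam * (1 / (2 * gam) * (t * ((2 - t) * ‖x - xp‖ ^ 2))) := by field_simp
      _ ≤ 2 * gam * (t * (⟪g, x - xp⟫ + h x - h xp)) := by gcongr
      _ = t * (2 * gam * (⟪g, x - xp⟫ + h x - h xp)) := by ring
  exact le_of_mul_le_mul_left hscaled ht0

theorem IsMinOn.norm_sub_sq_le {S : Set E} (hS : Convex ℝ S) {h : E → ℝ}
    (hh : ConvexOn ℝ S h) {g x xp : E} {gam : ℝ} (hgam : 0 < gam) (hx : x ∈ S) (hxp : xp ∈ S)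
    (hmin : IsMinOn (fun y => ⟪g, y⟫ + 1 / (2 * gam) * ‖y - x‖ ^ 2 + h y) S xp) :
    ‖x - xp‖ ^ 2 ≤ gam * (⟪g, x - xp⟫ + h x - h xp) := by
  have := two_mul_le_of_forall_sub_mul_le fun t ht0 ht1 =>
    hmin.sub_mul_norm_sub_sq_le hS hh hgam hx hxp ht0 ht1
  linarith

theorem stmt_11_general {n : ℕ} {S : Set (EuclideanSpace ℝ (Fin n))}
    (hS : Convex ℝ S)
    {h : EuclideanSpace ℝ (Fin n) → ℝ} {g : EuclideanSpace ℝ (Fin n) → EuclideanSpace ℝ (Fin n)}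
    (hh : ConvexOn ℝ Set.univ h)
    {gam : ℝ} (hgam : 0 < gam)
    {x xp : EuclideanSpace ℝ (Fin n)} (hx : x ∈ S) (hxp : xp ∈ S)
    (hmin : IsMinOn (fun y => ⟪g x, y⟫ + 1 / (2 * gam) * ‖y - x‖ ^ 2 + h y) S xp)
    {eps : ℝ} (hstat : ∀ y ∈ S, ⟪g x, y - x⟫ + h y - h x ≥ -eps) :
    ‖gam⁻¹ • (x - xp)‖ ^ 2 ≤ eps / gam := by
  have hprox := hmin.norm_sub_sq_le hS (hh.subset (Set.subset_univ S) hS) hgam hx hxp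
  have hgap : ⟪g x, x - xp⟫ + h x - h xp ≤ eps := by
    have := hstat xp hxp
    rw [← neg_sub x xp, inner_neg_right] at this
    linarith
  have hres : ‖x - xp‖ ^ 2 ≤ gam * eps :=
    hprox.trans (mul_le_mul_of_nonneg_left hgap hgam.le)
  rw [norm_smul, mul_pow, Real.norm_eq_abs, sq_abs, inv_pow, inv_mul_le_iff₀ (by positivity)]
  calc ‖x - xp‖ ^ 2 ≤ gam * eps := hres
    _ = gam ^ 2 * (eps / gam) := by field_simp

theorem stmt_11 {n : ℕ} {S : Set (EuclideanSpace ℝ (Fin n))}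
    (hS : Convex ℝ S) (hScpt : IsCompact S)
    {f h : EuclideanSpace ℝ (Fin n) → ℝ} {g : EuclideanSpace ℝ (Fin n) → EuclideanSpace ℝ (Fin n)}
    (hf : ∀ x, HasGradientAt f (g x) x)
    (hh : ConvexOn ℝ Set.univ h)
    {gam : ℝ} (hgam : 0 < gam)
    {x xp : EuclideanSpace ℝ (Fin n)} (hx : x ∈ S) (hxp : xp ∈ S)
    (hmin : IsMinOn (fun y => ⟪g x, y⟫ + 1 / (2 * gam) * ‖y - x‖ ^ 2 + h y) S xp)
    {eps : ℝ} (hstat : ∀ y ∈ S, ⟪g x, y - x⟫ + h y - h x ≥ -eps) :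
    ‖gam⁻¹ • (x - xp)‖ ^ 2 ≤ eps / gam :=
  stmt_11_general hS hh hgam hx hxp hmin hstat
end

section
/- Let S ⊆ ℝⁿ be convex compact, f differentiable with continuous gradient, h convex, γ > 0. With x⁺ and P_S(x,γ) as above, if ‖P_S(x,γ)‖₂² ≤ ε, then for all y ∈ S, ∇f(x)ᵀ(y − x) + h(y) − h(x) ≥ −(γτ + γς + diam₂(S))√ε, where τ = max_{x∈S}‖∇f(x)‖₂, ς = max_{x∈S} min_{z∈∂h(x)}‖z‖₂, and diam₂(S) = max_{x,y∈S}‖x−y‖₂. -/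
/-!
Comparing the proximal objective at `x⁺` with its values on the segment from `x⁺` to `y ∈ S`
gives the optimality condition `∇f(x)ᵀ(y - x⁺) + (x⁺ - x)ᵀ(y - x⁺)/γ + h y - h x⁺ ≥ 0`.
Splitting `∇f(x)ᵀ(y - x) + h y - h x` at `x⁺`, the remaining pieces `∇f(x)ᵀ(x⁺ - x)`,
`h x⁺ - h x` (bounded through a subgradient at `x`) and `(x⁺ - x)ᵀ(y - x⁺)/γ` are each at least
a constant times `‖x⁺ - x‖ = γ ‖P_S(x, γ)‖ ≤ γ √ε`.
-/

open Filter Set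
open scoped RealInnerProductSpace Topology

lemma nonneg_of_forall_nonneg_add_mul {A B : ℝ} (h : ∀ t, 0 < t → t ≤ 1 → 0 ≤ A + t * B) :
    0 ≤ A := by
  have hlim : Tendsto (fun t : ℝ => A + t * B) (𝓝[>] 0) (𝓝 A) :=
    ((continuous_const.add (continuous_id.mul continuous_const)).tendsto' 0 A
      (by simp)).mono_left nhdsWithin_le_nhds
  refine ge_of_tendsto hlim ?_
  filter_upwards [Ioc_mem_nhdsGT one_pos] with t ht using h t ht.1 ht.2

lemma neg_mul_norm_le_inner {E : Type*} [NormedAddCommGroup E] [InnerProductSpace ℝ E]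
    {u : E} {c : ℝ} (hu : ‖u‖ ≤ c) (v : E) : -(c * ‖v‖) ≤ ⟪u, v⟫ := by
  have := neg_abs_le ⟪u, v⟫
  nlinarith [abs_real_inner_le_norm u v, norm_nonneg v]

lemma norm_le_mul_sqrt_of_norm_inv_smul_sq_le {E : Type*} [NormedAddCommGroup E]
    [NormedSpace ℝ E] {γ ε : ℝ} (hγ : 0 < γ) {v : E} (hv : ‖γ⁻¹ • v‖ ^ 2 ≤ ε) :
    ‖v‖ ≤ γ * √ε := by
  have hsqrt : ‖γ⁻¹ • v‖ ≤ √ε := by simpa using Real.abs_le_sqrt hv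
  calc ‖v‖ = γ * ‖γ⁻¹ • v‖ := by
        rw [norm_smul, Real.norm_eq_abs, abs_inv, abs_of_pos hγ, mul_inv_cancel_left₀ hγ.ne']
    _ ≤ γ * √ε := by gcongr

lemma IsMinOn.inner_add_sub_nonneg_of_convexOn {E : Type*} [NormedAddCommGroup E]
    [InnerProductSpace ℝ E] {S : Set E} (hS : Convex ℝ S) {h : E → ℝ} (hh : ConvexOn ℝ S h)
    {a x xp : E} {c : ℝ} (hxp : xp ∈ S)
    (hmin : IsMinOn (fun y => ⟪a, y⟫ + c * ‖y - x‖ ^ 2 + h y) S xp) {y : E} (hy : y ∈ S) :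
    0 ≤ ⟪a, y - xp⟫ + 2 * c * ⟪xp - x, y - xp⟫ + h y - h xp := by
  refine nonneg_of_forall_nonneg_add_mul (B := c * ‖y - xp‖ ^ 2) fun t ht0 ht1 => ?_
  have hseg : xp + t • (y - xp) = (1 - t) • xp + t • y := by module
  have hzS : xp + t • (y - xp) ∈ S := hS.add_smul_sub_mem hxp hy ⟨ht0.le, ht1⟩
  have hval := isMinOn_iff.mp hmin _ hzS
  have hconv : h (xp + t • (y - xp)) ≤ (1 - t) * h xp + t * h y := by
    simpa [hseg] using hh.2 hxp hy (by linarith : (0 : ℝ) ≤ 1 - t) ht0.le (by ring)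
  have hinner : ⟪a, xp + t • (y - xp)⟫ = ⟪a, xp⟫ + t * ⟪a, y - xp⟫ := by
    rw [inner_add_right, real_inner_smul_right]
  have hsq : ‖xp + t • (y - xp) - x‖ ^ 2
      = ‖xp - x‖ ^ 2 + 2 * t * ⟪xp - x, y - xp⟫ + t ^ 2 * ‖y - xp‖ ^ 2 := by
    rw [show xp + t • (y - xp) - x = (xp - x) + t • (y - xp) by abel, norm_add_sq_real,
      real_inner_smul_right, norm_smul, Real.norm_eq_abs, mul_pow, sq_abs]
    ring
  simp only [hinner, hsq] at hval
  have : 0 ≤ t * (⟪a, y - xp⟫ + 2 * c * ⟪xp - x, y - xp⟫ + h y - h xp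
      + t * (c * ‖y - xp‖ ^ 2)) := by nlinarith
  exact nonneg_of_mul_nonneg_right (by linarith) ht0

theorem stmt_12_general {n : ℕ} {S : Set (EuclideanSpace ℝ (Fin n))}
    (hS : Convex ℝ S)
    {h : EuclideanSpace ℝ (Fin n) → ℝ} {g : EuclideanSpace ℝ (Fin n) → EuclideanSpace ℝ (Fin n)}
    (hh : ConvexOn ℝ Set.univ h)
    {gam : ℝ} (hgam : 0 < gam)
    {tau sig D : ℝ}
    (htau : ∀ w ∈ S, ‖g w‖ ≤ tau)
    (hsig : ∀ w ∈ S, ∃ s : EuclideanSpace ℝ (Fin n),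
      (∀ y, h y ≥ h w + ⟪s, y - w⟫) ∧ ‖s‖ ≤ sig)
    (hD : ∀ u ∈ S, ∀ v ∈ S, ‖u - v‖ ≤ D)
    {x xp : EuclideanSpace ℝ (Fin n)} (hx : x ∈ S) (hxp : xp ∈ S)
    (hmin : IsMinOn (fun y => ⟪g x, y⟫ + 1 / (2 * gam) * ‖y - x‖ ^ 2 + h y) S xp)
    {eps : ℝ}
    (hres : ‖gam⁻¹ • (x - xp)‖ ^ 2 ≤ eps) :
    ∀ y ∈ S, ⟪g x, y - x⟫ + h y - h x ≥ -(gam * tau + gam * sig + D) * Real.sqrt eps := by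
  intro y hy
  obtain ⟨s, hs, hs_le⟩ := hsig x hx
  have hstep : ‖xp - x‖ ≤ gam * √eps := by
    rw [norm_sub_rev]; exact norm_le_mul_sqrt_of_norm_inv_smul_sq_le hgam hres
  have hopt := hmin.inner_add_sub_nonneg_of_convexOn hS (hh.subset (subset_univ S) hS) hxp hy
  have hprox : ⟪xp - x, y - xp⟫ ≤ ‖xp - x‖ * D :=
    (real_inner_le_norm _ _).trans (by gcongr; exact hD y hy xp hxp)
  have hgrad := neg_mul_norm_le_inner (htau x hx) (xp - x)
  have hsub := neg_mul_norm_le_inner hs_le (xp - x)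
  have hcoef : 0 ≤ tau + sig + gam⁻¹ * D := by
    have := (norm_nonneg _).trans (htau x hx)
    have := (norm_nonneg _).trans hs_le
    have := (norm_nonneg _).trans (hD x hx x hx)
    positivity
  have hsplit : ⟪g x, y - x⟫ = ⟪g x, y - xp⟫ + ⟪g x, xp - x⟫ := by
    rw [← inner_add_right, sub_add_sub_cancel]
  calc ⟪g x, y - x⟫ + h y - h x ≥ -(tau + sig + gam⁻¹ * D) * ‖xp - x‖ := by
        have h2c : 2 * (1 / (2 * gam)) = gam⁻¹ := by field_simp
        rw [h2c] at hopt
        have := mul_le_mul_of_nonneg_left hprox (inv_nonneg.2 hgam.le)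
        linarith [hs xp]
    _ ≥ -(tau + sig + gam⁻¹ * D) * (gam * √eps) := by
        rw [ge_iff_le, neg_mul, neg_mul, neg_le_neg_iff]; gcongr
    _ = -(gam * tau + gam * sig + D) * √eps := by field_simp

theorem stmt_12 {n : ℕ} {S : Set (EuclideanSpace ℝ (Fin n))}
    (hS : Convex ℝ S) (hScpt : IsCompact S)
    {f h : EuclideanSpace ℝ (Fin n) → ℝ} {g : EuclideanSpace ℝ (Fin n) → EuclideanSpace ℝ (Fin n)}
    (hf : ∀ x, HasGradientAt f (g x) x) (hg : Continuous g)
    (hh : ConvexOn ℝ Set.univ h)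
    {gam : ℝ} (hgam : 0 < gam)
    {tau sig D : ℝ}
    (htau : ∀ w ∈ S, ‖g w‖ ≤ tau)
    (hsig : ∀ w ∈ S, ∃ s : EuclideanSpace ℝ (Fin n),
      (∀ y, h y ≥ h w + ⟪s, y - w⟫) ∧ ‖s‖ ≤ sig)
    (hD : ∀ u ∈ S, ∀ v ∈ S, ‖u - v‖ ≤ D)
    {x xp : EuclideanSpace ℝ (Fin n)} (hx : x ∈ S) (hxp : xp ∈ S)
    (hmin : IsMinOn (fun y => ⟪g x, y⟫ + 1 / (2 * gam) * ‖y - x‖ ^ 2 + h y) S xp)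
    {eps : ℝ} (heps : 0 ≤ eps)
    (hres : ‖gam⁻¹ • (x - xp)‖ ^ 2 ≤ eps) :
    ∀ y ∈ S, ⟪g x, y - x⟫ + h y - h x ≥ -(gam * tau + gam * sig + D) * Real.sqrt eps :=
  stmt_12_general hS hh hgam htau hsig hD hx hxp hmin hres
end

section
/- Suppose f satisfies f(y) ≤ f(x) + ∇f(x)ᵀ(y−x) + (λ/2)‖y−x‖_p^p on a convex compact set S (p > 1, conjugate q), h convex, Φ = f + h with minimum value Φ* over S. Let {x^k} be generated by x^{k+1} = argmin_{y∈S}{∇f(x^k)ᵀ(y−x^k) + (λ/2)‖y−x^k‖_p^p + h(y)}. Then for any N ≥ 1, min_{1≤k≤N} ΔU_k ≤ (Φ(x¹) − Φ*)/N, where ΔU_k = −∇f(x^k)ᵀ(x^{k+1}−x^k) − (λ/2)‖x^{k+1}−x^k‖_p^p + h(x^k) − h(x^{k+1}). -/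
/-! Rearranging the upper bound at `x k` gives `Φ (x (k+1)) ≤ Φ (x k) - ΔU k`. Summing over
`k = 1, …, N` telescopes to `∑ ΔU k ≤ Φ (x 1) - Φ*`, and the smallest `ΔU k` is at most the
average. -/

open scoped RealInnerProductSpace

open Finset in
theorem sum_Icc_le_sub_of_le_sub {φ d : ℕ → ℝ} (hstep : ∀ k ≥ 1, d k ≤ φ k - φ (k + 1))
    (N : ℕ) : ∑ k ∈ Icc 1 N, d k ≤ φ 1 - φ (N + 1) := by
  induction N with
  | zero => simp
  | succ N ih =>
    rw [sum_Icc_succ_top (Nat.le_add_left 1 N)]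
    linarith [hstep (N + 1) (Nat.le_add_left 1 N)]

open Finset in
theorem exists_le_sub_div_of_le_sub {φ d : ℕ → ℝ} {m : ℝ}
    (hstep : ∀ k ≥ 1, d k ≤ φ k - φ (k + 1)) {N : ℕ} (hN : 1 ≤ N) (hlow : m ≤ φ (N + 1)) :
    ∃ k, 1 ≤ k ∧ k ≤ N ∧ d k ≤ (φ 1 - m) / N := by
  have hNpos : (0 : ℝ) < N := by exact_mod_cast hN
  have hsum : ∑ k ∈ Icc 1 N, d k ≤ ∑ _k ∈ Icc 1 N, (φ 1 - m) / N := by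
    rw [sum_const, Nat.card_Icc, Nat.add_sub_cancel, nsmul_eq_mul, mul_div_cancel₀ _ hNpos.ne']
    linarith [sum_Icc_le_sub_of_le_sub hstep N]
  obtain ⟨k, hk, hdk⟩ := exists_le_of_sum_le ⟨1, mem_Icc.mpr ⟨le_rfl, hN⟩⟩ hsum
  exact ⟨k, (mem_Icc.mp hk).1, (mem_Icc.mp hk).2, hdk⟩

theorem stmt_14_general {n : ℕ} {S : Set (EuclideanSpace ℝ (Fin n))}
    {f h : EuclideanSpace ℝ (Fin n) → ℝ} {g : EuclideanSpace ℝ (Fin n) → EuclideanSpace ℝ (Fin n)}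
    {p lam : ℝ}
    (hdescent : ∀ x ∈ S, ∀ y ∈ S,
      f y ≤ f x + ⟪g x, y - x⟫ + lam / 2 * lpNorm p (y - x) ^ p)
    {Φstar : ℝ} (hstar : IsLeast ((fun y => f y + h y) '' S) Φstar)
    {x : ℕ → EuclideanSpace ℝ (Fin n)} (hx1 : x 1 ∈ S)
    (hiter : ∀ k ≥ 1, x (k + 1) ∈ S ∧
      IsMinOn (fun y => ⟪g (x k), y - x k⟫ + lam / 2 * lpNorm p (y - x k) ^ p + h y) S (x (k + 1))) :
    ∀ N : ℕ, 1 ≤ N → ∃ k, 1 ≤ k ∧ k ≤ N ∧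
      -⟪g (x k), x (k + 1) - x k⟫ - lam / 2 * lpNorm p (x (k + 1) - x k) ^ p
          + h (x k) - h (x (k + 1))
        ≤ ((f (x 1) + h (x 1)) - Φstar) / N := by
  intro N hN
  have hmem : ∀ k ≥ 1, x k ∈ S := fun k hk =>
    Nat.le_induction hx1 (fun k hk _ => (hiter k hk).1) k hk
  refine exists_le_sub_div_of_le_sub (φ := fun k => f (x k) + h (x k)) (fun k hk => ?_) hN
    (hstar.2 ⟨x (N + 1), hmem (N + 1) (Nat.le_add_left 1 N), rfl⟩)
  linarith [hdescent (x k) (hmem k hk) (x (k + 1)) (hmem (k + 1) (Nat.le_add_left 1 k))]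

theorem stmt_14 {n : ℕ} {S : Set (EuclideanSpace ℝ (Fin n))}
    (hS : Convex ℝ S) (hScpt : IsCompact S)
    {f h : EuclideanSpace ℝ (Fin n) → ℝ} {g : EuclideanSpace ℝ (Fin n) → EuclideanSpace ℝ (Fin n)}
    (hf : ∀ x, HasGradientAt f (g x) x)
    (hh : ConvexOn ℝ Set.univ h)
    {p q lam : ℝ} (hp : 1 < p) (hpq : 1 / p + 1 / q = 1) (hlam : 0 < lam)
    (hdescent : ∀ x ∈ S, ∀ y ∈ S,
      f y ≤ f x + ⟪g x, y - x⟫ + lam / 2 * lpNorm p (y - x) ^ p)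
    {Φstar : ℝ} (hstar : IsLeast ((fun y => f y + h y) '' S) Φstar)
    {x : ℕ → EuclideanSpace ℝ (Fin n)} (hx1 : x 1 ∈ S)
    (hiter : ∀ k ≥ 1, x (k + 1) ∈ S ∧
      IsMinOn (fun y => ⟪g (x k), y - x k⟫ + lam / 2 * lpNorm p (y - x k) ^ p + h y) S (x (k + 1))) :
    ∀ N : ℕ, 1 ≤ N → ∃ k, 1 ≤ k ∧ k ≤ N ∧
      -⟪g (x k), x (k + 1) - x k⟫ - lam / 2 * lpNorm p (x (k + 1) - x k) ^ p
          + h (x k) - h (x (k + 1))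
        ≤ ((f (x 1) + h (x 1)) - Φstar) / N :=
  stmt_14_general hdescent hstar hx1 hiter
end

section
/- (Smoothing approximation error bound.) Let h : ℝⁿ → ℝ be concave, S compact convex, r > 0, and suppose every subgradient g ∈ ∂h(x) for x ∈ S + B₂(0,r) satisfies ‖g‖₂ ≤ M. Define h_r(x) = E[h(x + rξ)] where ξ is uniformly distributed on the unit Euclidean ball. If x* minimizes f + h over S and x̃ minimizes f + h_r over S, then f(x̃) + h(x̃) ≤ f(x*) + h(x*) + M r. -/
/-!
Concavity gives both inequalities. By Jensen's inequality, averaging `h` over the ball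
`x + r • B` is at most its value at the centre, so `h_r ≤ h` everywhere; in particular
`f x̃ + h_r x̃ ≤ f x* + h_r x* ≤ f x* + h x*`. Conversely, a supergradient `s` of `h` at
`x̃ + r ξ` gives `h x̃ ≤ h (x̃ + r ξ) + ⟪s, -r ξ⟫ ≤ h (x̃ + r ξ) + M r`, and averaging over `ξ`
yields `h x̃ ≤ h_r x̃ + M r`.
-/

open scoped RealInnerProductSpace
open MeasureTheory Pointwise ProbabilityTheory Set Metric

section Supergradient

variable {E : Type*} [NormedAddCommGroup E] [InnerProductSpace ℝ E]

def IsSupergradient (h : E → ℝ) (x s : E) : Prop :=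
  ∀ y, h y ≤ h x + ⟪s, y - x⟫

theorem IsSupergradient.le_add_mul_of_mem_closedBall {h : E → ℝ} {x y s : E} {r M : ℝ}
    (hs : IsSupergradient h y s) (hsM : ‖s‖ ≤ M) (hy : y ∈ closedBall x r) :
    h x ≤ h y + M * r := by
  have hdist : ‖x - y‖ ≤ r := by rwa [mem_closedBall', dist_eq_norm] at hy
  calc h x ≤ h y + ⟪s, x - y⟫ := hs x
    _ ≤ h y + ‖s‖ * ‖x - y‖ := by gcongr; exact real_inner_le_norm s (x - y)
    _ ≤ h y + M * r := by gcongr; exact (norm_nonneg s).trans hsM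

theorem ConcaveOn.exists_le_add_dual {F : Type*} [NormedAddCommGroup F] [NormedSpace ℝ F]
    {h : F → ℝ} (hh : ConcaveOn ℝ univ h) (hc : Continuous h) (x : F) :
    ∃ ℓ : F →L[ℝ] ℝ, ∀ y, h y ≤ h x + ℓ (y - x) := by
  -- Separate `(x, h x)` from the open convex strict hypograph of `h`.
  obtain ⟨φ, hφ⟩ := geometric_hahn_banach_point_open hh.convex_strict_hypograph
    (by simpa only [mem_univ, true_and] using
      isOpen_lt continuous_snd (by fun_prop : Continuous fun p : F × ℝ => h p.1))
    (x := (x, h x)) (by simp)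
  set ℓ₀ := φ.comp (ContinuousLinearMap.inl ℝ F ℝ)
  set c := φ (0, 1)
  have hsplit : ∀ y t, φ (y, t) = ℓ₀ y + t * c := fun y t => by
    rw [show ((y, t) : F × ℝ) = (y, 0) + t • (0, 1) by simp, map_add, map_smul, smul_eq_mul]; rfl
  have hstrict : ∀ y t, t < h y → ℓ₀ x + h x * c < ℓ₀ y + t * c := fun y t ht => by
    simpa only [hsplit] using hφ (y, t) ⟨mem_univ _, ht⟩
  have hc_neg : c < 0 := by linarith [hstrict x (h x - 1) (by linarith)]
  -- Let `t` increase to `h y` in `hstrict`.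
  have hsupport : ∀ y, ℓ₀ x + h x * c ≤ ℓ₀ y + h y * c := fun y =>
    le_of_forall_pos_lt_add fun ε hε => by
      have := hstrict y (h y + ε / c) (by linarith [div_neg_of_pos_of_neg hε hc_neg])
      rwa [add_mul, div_mul_cancel₀ _ hc_neg.ne, ← add_assoc] at this
  refine ⟨(-c⁻¹) • ℓ₀, fun y => ?_⟩
  have hdiv : h y - h x ≤ (ℓ₀ x - ℓ₀ y) / c := by
    rw [le_div_iff_of_neg hc_neg]; linarith [hsupport y]
  have hℓ : ((-c⁻¹) • ℓ₀) (y - x) = (ℓ₀ x - ℓ₀ y) / c := by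
    simp only [FunLike.coe_smul, Pi.smul_apply, map_sub, smul_eq_mul]; ring
  linarith

theorem ConcaveOn.exists_isSupergradient [CompleteSpace E] {h : E → ℝ}
    (hh : ConcaveOn ℝ univ h) (hc : Continuous h) (x : E) : ∃ s, IsSupergradient h x s := by
  obtain ⟨ℓ, hℓ⟩ := hh.exists_le_add_dual hc x
  exact ⟨(InnerProductSpace.toDual ℝ E).symm ℓ, fun y => by simpa using hℓ y⟩

end Supergradient

section Smoothing

variable {E : Type*} [NormedAddCommGroup E] [MeasurableSpace E]
  {ν : Measure E} [IsProbabilityMeasure ν] {h : E → ℝ} {x : E} {r : ℝ}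

theorem ConcaveOn.integral_comp_add_smul_le [NormedSpace ℝ E] [CompleteSpace E]
    (hh : ConcaveOn ℝ univ h) (hc : Continuous h) (hν : Integrable id ν)
    (hν₀ : ∫ ξ, ξ ∂ν = 0) (hi : Integrable (fun ξ => h (x + r • ξ)) ν) :
    ∫ ξ, h (x + r • ξ) ∂ν ≤ h x := by
  have hrξ : Integrable (fun ξ => r • ξ) ν := hν.smul r
  have hmean : ∫ ξ, (x + r • ξ) ∂ν = x := by
    rw [integral_add (integrable_const x) hrξ, integral_const, integral_smul, hν₀]
    simp
  calc ∫ ξ, h (x + r • ξ) ∂ν ≤ h (∫ ξ, (x + r • ξ) ∂ν) :=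
        hh.le_map_integral hc.continuousOn isClosed_univ (by simp) ((integrable_const x).add hrξ) hi
    _ = h x := by rw [hmean]

theorem le_integral_comp_add_smul_add_mul [InnerProductSpace ℝ E] {M : ℝ} (hr : 0 ≤ r)
    (hν : ∀ᵐ ξ ∂ν, ‖ξ‖ ≤ 1)
    (hM : ∀ y ∈ closedBall x r, ∃ s, IsSupergradient h y s ∧ ‖s‖ ≤ M)
    (hi : Integrable (fun ξ => h (x + r • ξ)) ν) :
    h x ≤ ∫ ξ, h (x + r • ξ) ∂ν + M * r := by
  have hpt : ∀ᵐ ξ ∂ν, h x - M * r ≤ h (x + r • ξ) := hν.mono fun ξ hξ => by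
    have hy : x + r • ξ ∈ closedBall x r := by
      rw [mem_closedBall, dist_eq_norm, add_sub_cancel_left, norm_smul, Real.norm_of_nonneg hr]
      exact mul_le_of_le_one_right hr hξ
    obtain ⟨s, hs, hsM⟩ := hM _ hy
    linarith [hs.le_add_mul_of_mem_closedBall hsM hy]
  have := integral_mono_ae (integrable_const _) hi hpt
  rw [integral_const, probReal_univ, one_smul] at this
  linarith

end Smoothing

theorem setAverage_eq_integral_cond {α E : Type*} [MeasurableSpace α] [NormedAddCommGroup E]
    [NormedSpace ℝ E] (μ : Measure α) (s : Set α) (f : α → E) :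
    ⨍ a in s, f a ∂μ = ∫ a, f a ∂μ[|s] := by
  rw [average, Measure.restrict_apply_univ]
  rfl

theorem ae_norm_le_one_cond_ball {E : Type*} [SeminormedAddCommGroup E] [MeasurableSpace E]
    [OpensMeasurableSpace E] (μ : Measure E) : ∀ᵐ ξ ∂μ[|ball (0 : E) 1], ‖ξ‖ ≤ 1 :=
  (ae_cond_mem measurableSet_ball).mono fun _ hξ => (mem_ball_zero_iff.1 hξ).le

section UniformBall

variable {E : Type*} [NormedAddCommGroup E] [ProperSpace E] [MeasurableSpace E] (μ : Measure E)
  [μ.IsOpenPosMeasure] [IsFiniteMeasureOnCompacts μ]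

theorem isProbabilityMeasure_cond_ball : IsProbabilityMeasure μ[|ball (0 : E) 1] :=
  cond_isProbabilityMeasure_of_finite (measure_ball_pos μ 0 one_pos).ne' measure_ball_lt_top.ne

theorem Continuous.integrable_cond_ball [OpensMeasurableSpace E] {F : Type*}
    [NormedAddCommGroup F] {g : E → F} (hg : Continuous g) :
    Integrable g μ[|ball (0 : E) 1] :=
  ((hg.continuousOn.integrableOn_compact (isCompact_closedBall 0 1)).mono_set
    ball_subset_closedBall).smul_measure (ENNReal.inv_ne_top.2 (measure_ball_pos μ 0 one_pos).ne')

end UniformBall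

theorem integral_id_cond_ball {E : Type*} [NormedAddCommGroup E] [NormedSpace ℝ E]
    [MeasurableSpace E] [BorelSpace E] (μ : Measure E) [μ.IsNegInvariant] :
    ∫ ξ, ξ ∂μ[|ball (0 : E) 1] = 0 := by
  have hsymm : Neg.neg ⁻¹' ball (0 : E) 1 = ball 0 1 := by ext; simp
  have hneg : ∫ ξ in ball (0 : E) 1, -ξ ∂μ = ∫ ξ in ball (0 : E) 1, ξ ∂μ := by
    simpa only [hsymm] using (Measure.measurePreserving_neg μ).setIntegral_preimage_emb
      (Homeomorph.neg E).measurableEmbedding (fun ξ => ξ) (ball 0 1)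
  rw [integral_neg, neg_eq_iff_add_eq_zero, ← two_smul ℝ, smul_eq_zero] at hneg
  simp only [ProbabilityTheory.cond, integral_smul_measure, hneg.resolve_left two_ne_zero,
    smul_zero]

theorem stmt_18_general {n : ℕ} {S : Set (EuclideanSpace ℝ (Fin n))}
    {f h : EuclideanSpace ℝ (Fin n) → ℝ}
    (hh : ConcaveOn ℝ Set.univ h)
    {r M : ℝ} (hr : 0 < r)
    (hM : ∀ x ∈ S + Metric.closedBall (0 : EuclideanSpace ℝ (Fin n)) r,
      ∀ s : EuclideanSpace ℝ (Fin n),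
        (∀ y, h y ≤ h x + ⟪s, y - x⟫) → ‖s‖ ≤ M)
    {xstar xtil : EuclideanSpace ℝ (Fin n)} (hxstar : xstar ∈ S) (hxtil : xtil ∈ S)
    (hmintil : IsMinOn
      (fun x => f x + ⨍ ξ in Metric.ball (0 : EuclideanSpace ℝ (Fin n)) 1, h (x + r • ξ)) S xtil) :
    f xtil + h xtil ≤ f xstar + h xstar + M * r := by
  have hc : Continuous h := continuousOn_univ.1 (hh.continuousOn isOpen_univ)
  set ν := (volume : Measure (EuclideanSpace ℝ (Fin n)))[|ball 0 1]
  have := isProbabilityMeasure_cond_ball (volume : Measure (EuclideanSpace ℝ (Fin n)))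
  have hi : ∀ x, Integrable (fun ξ => h (x + r • ξ)) ν := fun x =>
    (hc.comp (continuous_const.add (continuous_const_smul r))).integrable_cond_ball volume
  have hball : closedBall xtil r ⊆ S + closedBall 0 r := by
    rw [← singleton_add_closedBall_zero]
    exact add_subset_add_right (singleton_subset_iff.2 hxtil)
  have hupper : ∫ ξ, h (xstar + r • ξ) ∂ν ≤ h xstar :=
    hh.integral_comp_add_smul_le hc (continuous_id.integrable_cond_ball volume)
      (integral_id_cond_ball volume) (hi xstar)
  have hlower : h xtil ≤ ∫ ξ, h (xtil + r • ξ) ∂ν + M * r :=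
    le_integral_comp_add_smul_add_mul hr.le (ae_norm_le_one_cond_ball volume)
      (fun y hy => (hh.exists_isSupergradient hc y).imp fun s hs => ⟨hs, hM y (hball hy) s hs⟩)
      (hi xtil)
  have hmin := isMinOn_iff.1 hmintil xstar hxstar
  simp only [setAverage_eq_integral_cond] at hmin
  linarith

theorem stmt_18 {n : ℕ} {S : Set (EuclideanSpace ℝ (Fin n))}
    (hS : Convex ℝ S) (hScpt : IsCompact S)
    {f h : EuclideanSpace ℝ (Fin n) → ℝ}
    (hh : ConcaveOn ℝ Set.univ h)
    {r M : ℝ} (hr : 0 < r)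
    (hM : ∀ x ∈ S + Metric.closedBall (0 : EuclideanSpace ℝ (Fin n)) r,
      ∀ s : EuclideanSpace ℝ (Fin n),
        (∀ y, h y ≤ h x + ⟪s, y - x⟫) → ‖s‖ ≤ M)
    {xstar xtil : EuclideanSpace ℝ (Fin n)} (hxstar : xstar ∈ S) (hxtil : xtil ∈ S)
    (hminstar : IsMinOn (fun x => f x + h x) S xstar)
    (hmintil : IsMinOn
      (fun x => f x + ⨍ ξ in Metric.ball (0 : EuclideanSpace ℝ (Fin n)) 1, h (x + r • ξ)) S xtil) :
    f xtil + h xtil ≤ f xstar + h xstar + M * r :=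
  stmt_18_general hh hr hM hxstar hxtil hmintil
end

section
/- (Closed-form solution of the ℓ₁-regularized linear subproblem over the Euclidean ball.) For b ∈ ℝⁿ and ρ > 0, define z componentwise by z_j = sign(b_j)·max{|b_j| − ρ, 0}. Then y* = z/‖z‖₂ if z ≠ 0 (and y* = 0 if z = 0) is a global minimizer of the problem min_{‖y‖₂ ≤ 1} { −yᵀb + ρ‖y‖₁ }. -/
/-!
Coordinatewise, `y x - ρ |y| ≤ |y| |zₓ|` for the soft-thresholded value `zₓ`, with equality at
`y = zₓ`, where both sides equal `zₓ²`. Summing and applying Cauchy–Schwarz bounds the objective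
below by `-‖y‖ ‖z‖ ≥ -‖z‖` on the unit ball, while the objective is positively homogeneous and
equals `-‖z‖²` at `z`, hence `-‖z‖` at `z / ‖z‖`.
-/

open scoped RealInnerProductSpace

noncomputable section

def softThreshold (ρ x : ℝ) : ℝ := Real.sign x * max (|x| - ρ) 0

section SoftThreshold

variable {ρ x : ℝ}

theorem softThreshold_eq_zero (h : |x| ≤ ρ) : softThreshold ρ x = 0 := by
  simp [softThreshold, h]

theorem softThreshold_eq_sub (hρ : 0 ≤ ρ) (h : ρ < x) : softThreshold ρ x = x - ρ := by
  have hx : 0 < x := hρ.trans_lt h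
  rw [softThreshold, Real.sign_of_pos hx, abs_of_pos hx, max_eq_left (by linarith), one_mul]

theorem softThreshold_eq_add (hρ : 0 ≤ ρ) (h : x < -ρ) : softThreshold ρ x = x + ρ := by
  have hx : x < 0 := h.trans_le (neg_nonpos.2 hρ)
  rw [softThreshold, Real.sign_of_neg hx, abs_of_neg hx, max_eq_left (by linarith)]
  ring

theorem softThreshold_cases (hρ : 0 ≤ ρ) :
    (x < -ρ ∧ softThreshold ρ x = x + ρ) ∨ (|x| ≤ ρ ∧ softThreshold ρ x = 0) ∨
      (ρ < x ∧ softThreshold ρ x = x - ρ) := by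
  rcases lt_or_ge x (-ρ) with h | h
  · exact .inl ⟨h, softThreshold_eq_add hρ h⟩
  rcases lt_or_ge ρ x with h' | h'
  · exact .inr (.inr ⟨h', softThreshold_eq_sub hρ h'⟩)
  have habs : |x| ≤ ρ := abs_le.2 ⟨h, h'⟩
  exact .inr (.inl ⟨habs, softThreshold_eq_zero habs⟩)

theorem softThreshold_mul_sub_mul_abs (hρ : 0 ≤ ρ) :
    softThreshold ρ x * x - ρ * |softThreshold ρ x| = softThreshold ρ x ^ 2 := by
  rcases softThreshold_cases (x := x) hρ with ⟨h, hs⟩ | ⟨-, hs⟩ | ⟨h, hs⟩ <;> rw [hs]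
  · rw [abs_of_neg (by linarith)]; ring
  · simp
  · rw [abs_of_pos (by linarith)]; ring

theorem mul_sub_mul_abs_le_abs_mul_abs_softThreshold (hρ : 0 ≤ ρ) (y : ℝ) :
    y * x - ρ * |y| ≤ |y| * |softThreshold ρ x| := by
  have hyx : y * x ≤ |y| * |x| := (le_abs_self _).trans (abs_mul y x).le
  have hy : 0 ≤ |y| := abs_nonneg y
  rcases softThreshold_cases (x := x) hρ with ⟨h, hs⟩ | ⟨h, hs⟩ | ⟨h, hs⟩ <;> rw [hs]
  · rw [abs_of_neg (by linarith : x < 0)] at hyx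
    rw [abs_of_neg (by linarith : x + ρ < 0)]
    nlinarith
  · rw [abs_zero, mul_zero]
    nlinarith [mul_le_mul_of_nonneg_left h hy]
  · rw [abs_of_pos (by linarith : 0 < x)] at hyx
    rw [abs_of_pos (by linarith : 0 < x - ρ)]
    nlinarith

end SoftThreshold

theorem EuclideanSpace.sum_abs_mul_abs_le_norm_mul_norm {ι : Type*} [Fintype ι]
    (x y : EuclideanSpace ℝ ι) : ∑ i, |x i| * |y i| ≤ ‖x‖ * ‖y‖ := by
  simpa only [EuclideanSpace.norm_eq, Real.norm_eq_abs, sq_abs] using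
    Real.sum_mul_le_sqrt_mul_sqrt Finset.univ (fun i => |x i|) (fun i => |y i|)

section L1Objective

variable {ι : Type*} [Fintype ι] {ρ : ℝ} {b z : EuclideanSpace ℝ ι}

def l1Objective (ρ : ℝ) (b y : EuclideanSpace ℝ ι) : ℝ := -⟪y, b⟫ + ρ * ∑ j, |y j|

theorem l1Objective_smul {c : ℝ} (hc : 0 ≤ c) (y : EuclideanSpace ℝ ι) :
    l1Objective ρ b (c • y) = c * l1Objective ρ b y := by
  simp only [l1Objective, real_inner_smul_left, PiLp.smul_apply, smul_eq_mul, abs_mul,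
    abs_of_nonneg hc, ← Finset.mul_sum]
  ring

theorem l1Objective_of_softThreshold (hρ : 0 ≤ ρ) (hz : ∀ j, z j = softThreshold ρ (b j)) :
    l1Objective ρ b z = -‖z‖ ^ 2 := by
  have hcoord (j : ι) : z j * b j - ρ * |z j| = z j ^ 2 := hz j ▸ softThreshold_mul_sub_mul_abs hρ
  simp only [l1Objective, EuclideanSpace.real_norm_sq_eq, PiLp.inner_apply, Real.inner_apply,
    Finset.mul_sum, ← hcoord, Finset.sum_sub_distrib]
  ring

theorem neg_norm_mul_norm_le_l1Objective (hρ : 0 ≤ ρ) (hz : ∀ j, z j = softThreshold ρ (b j))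
    (y : EuclideanSpace ℝ ι) : -(‖y‖ * ‖z‖) ≤ l1Objective ρ b y := by
  have hcoord (j : ι) : y j * b j - ρ * |y j| ≤ |y j| * |z j| :=
    hz j ▸ mul_sub_mul_abs_le_abs_mul_abs_softThreshold hρ (y j)
  have hsum : ⟪y, b⟫ - ρ * ∑ j, |y j| ≤ ∑ j, |y j| * |z j| := by
    simpa only [PiLp.inner_apply, Real.inner_apply, Finset.mul_sum, Finset.sum_sub_distrib]
      using Finset.sum_le_sum fun j _ => hcoord j
  rw [l1Objective]
  linarith [EuclideanSpace.sum_abs_mul_abs_le_norm_mul_norm y z]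

end L1Objective

end

open scoped Classical in
theorem stmt_19 {n : ℕ} (b : EuclideanSpace ℝ (Fin n)) {rho : ℝ} (hrho : 0 < rho)
    (z : EuclideanSpace ℝ (Fin n))
    (hz : ∀ j, z j = Real.sign (b j) * max (|b j| - rho) 0)
    (ystar : EuclideanSpace ℝ (Fin n))
    (hystar : ystar = if z = 0 then 0 else ‖z‖⁻¹ • z) :
    ystar ∈ Metric.closedBall (0 : EuclideanSpace ℝ (Fin n)) 1 ∧
      IsMinOn (fun y : EuclideanSpace ℝ (Fin n) => -⟪y, b⟫ + rho * ∑ j, |y j|)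
        (Metric.closedBall (0 : EuclideanSpace ℝ (Fin n)) 1) ystar := by
  have hz : ∀ j, z j = softThreshold rho (b j) := hz
  -- `‖0‖⁻¹ • 0 = 0`, so the case split in `ystar` is only apparent.
  obtain rfl : ystar = ‖z‖⁻¹ • z := by split_ifs at hystar with h <;> simp [hystar, h]
  have hnorm : ‖‖z‖⁻¹ • z‖ ≤ 1 := by rw [norm_smul, norm_inv, norm_norm]; exact inv_mul_le_one
  refine ⟨mem_closedBall_zero_iff.2 hnorm, isMinOn_iff.2 fun y hy => ?_⟩
  have hy : ‖y‖ ≤ 1 := mem_closedBall_zero_iff.1 hy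
  change l1Objective rho b _ ≤ l1Objective rho b y
  calc l1Objective rho b (‖z‖⁻¹ • z) = -‖z‖ := by
        rw [l1Objective_smul (inv_nonneg.2 (norm_nonneg z)),
          l1Objective_of_softThreshold hrho.le hz]
        rcases eq_or_ne ‖z‖ 0 with h | h
        · simp [h]
        · field_simp
    _ ≤ -(‖y‖ * ‖z‖) := neg_le_neg (mul_le_of_le_one_left (norm_nonneg z) hy)
    _ ≤ l1Objective rho b y := neg_norm_mul_norm_le_l1Objective hrho.le hz y
end
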